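/- arXiv:0908.1728 — 2 statements merged into one kernel-verified Lean document; each statement's English description precedes it below -/
import Mathlib

section
/- Let m₁, …, m_r be nonzero complex numbers and suppose a family of seminorms satisfies |Λ(ρ(a)Y^{𝐍}u)| = |∏ m_i^{N_i}| · |a^{(𝐍)}| · |Λ(ρ(a)u)| where a^{(𝐍)} = ∏ (t_i/t_{i+1})^{N_i} for a = diag-type parameter 𝐭 ∈ (ℝ₊ˣ)^{r+1}. If moreover |Λ(ρ(a)u)| ≤ ‖a‖^c |u|₀ for a continuous seminorm |·|₀, then for every positive integer N there is a continuous seminorm |·|_N (a finite nonnegative combination of the seminorms u ↦ |ρ(Y^{𝐍})u|₀) such that |Λ(ρ(a_𝐭)u)| ≤ ξ(𝐭)^{-N} ‖a_𝐭‖^c |u|_N for all 𝐭 ∈ (ℝ₊ˣ)^{r+1}, where ξ(𝐭) = ∏_{i=1}^r (1 + t_i/t_{i+1}). -/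
/-!
Expanding `ξ(t)^N = ∏ᵢ (1 + xᵢ)^N`, with `xᵢ = tᵢ/tᵢ₊₁`, by the binomial theorem in each factor
writes it as `∑_ν ∏ᵢ C(N, νᵢ) xᵢ^{νᵢ}` over `ν ∈ {0,…,N}^r`. By the commutation identity,
`x^ν |Λ(ρ(a)u)| = |m^ν|⁻¹ |Λ(ρ(a) Y^ν u)|`, and the latter is at most `‖a‖^c |Y^ν u|₀`.
Summing over `ν` bounds `ξ(t)^N |Λ(ρ(a)u)|` by `‖a‖^c |u|_N` with
`|u|_N = ∑_ν ∏ᵢ C(N, νᵢ) |mᵢ|^{-νᵢ} · |Y^ν u|₀`.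
-/

open Finset

theorem one_add_pow_eq_sum_fin {R : Type*} [CommSemiring R] (x : R) (N : ℕ) :
    (1 + x) ^ N = ∑ k : Fin (N + 1), (N.choose k : R) * x ^ (k : ℕ) := by
  rw [add_comm, add_pow, ← Fin.sum_univ_eq_sum_range]
  exact sum_congr rfl fun k _ => by ring

theorem prod_one_add_pow_eq_sum_fin {ι R : Type*} [Fintype ι] [DecidableEq ι] [CommSemiring R]
    (x : ι → R) (N : ℕ) :
    (∏ i, (1 + x i)) ^ N =
      ∑ ν : ι → Fin (N + 1), ∏ i, (N.choose (ν i) : R) * x i ^ (ν i : ℕ) := by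
  simp_rw [← prod_pow, one_add_pow_eq_sum_fin]
  rw [prod_univ_sum, Fintype.piFinset_univ]

theorem prod_mul_pow_mul_le_of_prod_pow_mul_le {ι : Type*} [Fintype ι] {w μ x : ι → ℝ}
    {k : ι → ℕ} {L B : ℝ} (hw : ∀ i, 0 ≤ w i) (hμ : ∀ i, 0 < μ i)
    (h : (∏ i, μ i ^ k i) * (∏ i, x i ^ k i) * L ≤ B) :
    (∏ i, w i * x i ^ k i) * L ≤ (∏ i, w i / μ i ^ k i) * B := by
  have hM : (∏ i, μ i ^ k i) ≠ 0 := (prod_pos fun i _ => pow_pos (hμ i) _).ne'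
  calc (∏ i, w i * x i ^ k i) * L
      = (∏ i, w i / μ i ^ k i) * ((∏ i, μ i ^ k i) * (∏ i, x i ^ k i) * L) := by
        rw [prod_mul_distrib, prod_div_distrib]
        field_simp
    _ ≤ (∏ i, w i / μ i ^ k i) * B :=
        mul_le_mul_of_nonneg_left h (prod_nonneg fun i _ => div_nonneg (hw i) (pow_pos (hμ i) _).le)

/-- `ρa tv` stands for `ρ(a_tv)`, `YN ν` for `ρ(Y^ν)`, `Λabs u` for `|Λ(u)|`, `norm0` for `|·|₀`,
`nrm tv` for `‖a_tv‖`, and `m i` for `mᵢ = -dψ(Yᵢ)`; the seminorm `|·|_N` is `∑_ν a ν · |Y^ν ·|₀`. -/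
theorem whittaker_majorization_general
    (r : ℕ)
    (V : Type*) [AddCommGroup V] [Module ℂ V]
    (ρa : (Fin (r + 1) → ℝ) → (V →ₗ[ℂ] V))
    (YN : (Fin r → ℕ) → (V →ₗ[ℂ] V))
    (Λabs norm0 : V → ℝ)
    (nrm : (Fin (r + 1) → ℝ) → ℝ)
    (m : Fin r → ℂ) (hm : ∀ i, m i ≠ 0)
    (c : ℝ)
    (hcomm : ∀ (tv : Fin (r + 1) → ℝ), (∀ i, 0 < tv i) → ∀ (ν : Fin r → ℕ) (u : V),
      Λabs (ρa tv (YN ν u)) =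
        (∏ i : Fin r, ‖m i‖ ^ ν i) *
        (∏ i : Fin r, (tv i.castSucc / tv i.succ) ^ ν i) * Λabs (ρa tv u))
    (hbound : ∀ (tv : Fin (r + 1) → ℝ), (∀ i, 0 < tv i) → ∀ u : V,
      Λabs (ρa tv u) ≤ nrm tv ^ c * norm0 u)
    (N : ℕ) :
    ∃ a : (Fin r → Fin (N + 1)) → ℝ, (∀ ν, 0 ≤ a ν) ∧
      ∀ (tv : Fin (r + 1) → ℝ), (∀ i, 0 < tv i) → ∀ u : V,
        Λabs (ρa tv u) ≤
          ((∏ i : Fin r, (1 + tv i.castSucc / tv i.succ)) ^ N)⁻¹ * nrm tv ^ c *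
            ∑ ν : Fin r → Fin (N + 1),
              a ν * norm0 (YN (fun i => (ν i : ℕ)) u) := by
  have hμ : ∀ i, 0 < ‖m i‖ := fun i => norm_pos_iff.mpr (hm i)
  refine ⟨fun ν => ∏ i, (N.choose (ν i) : ℝ) / ‖m i‖ ^ (ν i : ℕ),
    fun ν => prod_nonneg fun i _ => div_nonneg (Nat.cast_nonneg _) (pow_pos (hμ i) _).le, ?_⟩
  intro tv htv u
  have hξ : 0 < (∏ i : Fin r, (1 + tv i.castSucc / tv i.succ)) ^ N :=
    pow_pos (prod_pos fun i _ => add_pos one_pos (div_pos (htv _) (htv _))) N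
  rw [mul_assoc, le_inv_mul_iff₀ hξ, prod_one_add_pow_eq_sum_fin, sum_mul, mul_sum]
  refine sum_le_sum fun ν _ => ?_
  rw [mul_left_comm]
  refine prod_mul_pow_mul_le_of_prod_pow_mul_le (fun i => Nat.cast_nonneg _) hμ ?_
  rw [← hcomm tv htv]
  exact hbound tv htv _

/-- majorization of Whittaker functions, abstract form.
`ρa tv` stands for `ρ(a_tv)`, `YN ν` for `ρ(Y^ν)` (`Y^ν = Y₁^{ν₁}⋯Y_r^{ν_r}`),
`Λabs u` for `|Λ(u)|_{π₀}`, `norm0` for the continuous seminorm `|·|_{ρ,0}`,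
`nrm tv` for `‖a_tv‖`, and `m i` for the nonzero numbers `mᵢ = -ψ(Yᵢ)`.  Under the
commutation identity and the bound `|Λ(ρ(a)u)| ≤ ‖a‖^c |u|₀`, for every positive
integer `N` there is a continuous seminorm `|·|_N` — a finite nonnegative
combination of the seminorms `u ↦ |ρ(Y^ν)u|₀` — with
`|Λ(ρ(a_tv)u)| ≤ ξ(tv)^{-N} ‖a_tv‖^c |u|_N`, where `ξ(tv) = ∏ (1 + tᵢ/tᵢ₊₁)`. -/
theorem whittaker_majorization
    (r : ℕ) (hr : 1 ≤ r)
    (V : Type*) [AddCommGroup V] [Module ℂ V]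
    (ρa : (Fin (r + 1) → ℝ) → (V →ₗ[ℂ] V))
    (YN : (Fin r → ℕ) → (V →ₗ[ℂ] V))
    (Λabs norm0 : V → ℝ)
    (hΛabs : ∀ u, 0 ≤ Λabs u) (hnorm0 : ∀ u, 0 ≤ norm0 u)
    (nrm : (Fin (r + 1) → ℝ) → ℝ)
    (hnrm : ∀ tv, 0 < nrm tv)
    (m : Fin r → ℂ) (hm : ∀ i, m i ≠ 0)
    (c : ℝ) (hc : 0 < c)
    (hcomm : ∀ (tv : Fin (r + 1) → ℝ), (∀ i, 0 < tv i) → ∀ (ν : Fin r → ℕ) (u : V),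
      Λabs (ρa tv (YN ν u)) =
        (∏ i : Fin r, ‖m i‖ ^ ν i) *
        (∏ i : Fin r, (tv i.castSucc / tv i.succ) ^ ν i) * Λabs (ρa tv u))
    (hbound : ∀ (tv : Fin (r + 1) → ℝ), (∀ i, 0 < tv i) → ∀ u : V,
      Λabs (ρa tv u) ≤ nrm tv ^ c * norm0 u)
    (N : ℕ) (hN : 0 < N) :
    ∃ a : (Fin r → Fin (N + 1)) → ℝ, (∀ ν, 0 ≤ a ν) ∧
      ∀ (tv : Fin (r + 1) → ℝ), (∀ i, 0 < tv i) → ∀ u : V,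
        Λabs (ρa tv u) ≤
          ((∏ i : Fin r, (1 + tv i.castSucc / tv i.succ)) ^ N)⁻¹ * nrm tv ^ c *
            ∑ ν : Fin r → Fin (N + 1),
              a ν * norm0 (YN (fun i => (ν i : ℕ)) u) :=
  whittaker_majorization_general r V ρa YN Λabs norm0 nrm m hm c hcomm hbound N
end

section
/- Let c_J' ≥ 0 and let J : (0,∞)^{r+1} → [0,∞) be continuous with J(𝐭) ≤ (∏_{j=1}^r (α_j + α_j⁻¹)^{c_J'}) · (t_{r+1} + t_{r+1}⁻¹)^{c_J'} where α_j = t_j/t_{j+1} for j < r and α_r = t_r/t'_{r+1} with t'_{r+1} = 2(t_{r+1}⁻² + t_{r+1}² + 2)^{-1/2}. Then there exists c_J > 0 such that for every s > c_J there is a positive integer N with ∫_{(0,∞)^{r+1}} (t₁⋯t_r · t'_{r+1})^s · ξ(t₁,…,t_r,t'_{r+1})^{-N} · J(𝐭) d×𝐭 < ∞, where ξ(u₁,…,u_{r+1}) = ∏_{i=1}^r (1 + u_i/u_{i+1}) and d×𝐭 = ∏ dt_i/t_i. -/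
open MeasureTheory Finset Set
namespace ConvMajorAux
noncomputable def Dd (x : ℝ) : ℝ := max x x⁻¹

lemma one_le_Dd {x : ℝ} (hx : 0 < x) : 1 ≤ Dd x := by
  rcases le_total 1 x with h | h
  · exact h.trans (le_max_left _ _)
  · exact ((one_le_inv₀ hx).mpr h).trans (le_max_right _ _)

lemma Dd_pos {x : ℝ} (hx : 0 < x) : 0 < Dd x :=
  lt_of_lt_of_le one_pos (one_le_Dd hx)

lemma le_Dd_self {x : ℝ} : x ≤ Dd x := le_max_left _ _
lemma inv_le_Dd {x : ℝ} : x⁻¹ ≤ Dd x := le_max_right _ _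

lemma Dd_submul {a b : ℝ} (ha : 0 < a) (hb : 0 < b) : Dd a ≤ Dd (a / b) * Dd b := by
  have hab : 0 < a / b := div_pos ha hb
  refine max_le ?_ ?_
  · calc a = (a / b) * b := (div_mul_cancel₀ a hb.ne').symm
      _ ≤ Dd (a / b) * Dd b := mul_le_mul le_Dd_self le_Dd_self hb.le (Dd_pos hab).le
  · calc a⁻¹ = (a / b)⁻¹ * b⁻¹ := by field_simp
      _ ≤ Dd (a / b) * Dd b := mul_le_mul inv_le_Dd inv_le_Dd (by positivity) (Dd_pos hab).le

lemma add_inv_le_two_Dd {x : ℝ} : x + x⁻¹ ≤ 2 * Dd x := by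
  have h1 := le_max_left x x⁻¹
  have h2 := le_max_right x x⁻¹
  unfold Dd; linarith

lemma Dd_le_add_inv {x : ℝ} (hx : 0 < x) : Dd x ≤ x + x⁻¹ := by
  have h1 : 0 < x⁻¹ := by positivity
  exact max_le (by linarith) (by linarith)

lemma rpow_neg_anti {a b ε : ℝ} (hε : 0 ≤ ε) (ha : 0 < a) (hab : a ≤ b) :
    b ^ (-ε) ≤ a ^ (-ε) := by
  rw [Real.rpow_neg (ha.trans_le hab).le, Real.rpow_neg ha.le]
  exact inv_anti₀ (Real.rpow_pos_of_pos ha ε) (Real.rpow_le_rpow ha.le hab hε)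

lemma tprime_eq {t : ℝ} (ht : 0 < t) :
    2 * (t⁻¹ ^ 2 + t ^ 2 + 2) ^ ((-1 : ℝ) / 2) = 2 * (t + t⁻¹)⁻¹ := by
  have hy : 0 < t + t⁻¹ := by positivity
  have h1 : t⁻¹ ^ 2 + t ^ 2 + 2 = (t + t⁻¹) ^ 2 := by field_simp; ring
  rw [h1, ← Real.rpow_natCast (t + t⁻¹) 2, ← Real.rpow_mul hy.le]
  norm_num
  rw [Real.rpow_neg_one]


lemma integrable_h {ε : ℝ} (hε : 0 < ε) :
    IntegrableOn (fun u : ℝ => Dd u ^ (-ε) * u⁻¹) (Set.Ioi 0) := by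
  have hIoi : Set.Ioc (0:ℝ) 1 ∪ Set.Ioi 1 = Set.Ioi 0 := Set.Ioc_union_Ioi_eq_Ioi zero_le_one
  rw [← hIoi]
  refine IntegrableOn.union ?_ ?_
  · rw [integrableOn_Ioc_iff_integrableOn_Ioo]
    have h1 : IntegrableOn (fun u : ℝ => u ^ (ε - 1)) (Set.Ioo (0:ℝ) 1) :=
      (intervalIntegral.integrableOn_Ioo_rpow_iff zero_lt_one).mpr (by linarith)
    refine h1.congr_fun (fun u hu => ?_) measurableSet_Ioo
    have hu0 : 0 < u := hu.1
    have hu1 : u ≤ 1 := hu.2.le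
    have hm : Dd u = u⁻¹ := max_eq_right (hu1.trans ((one_le_inv₀ hu0).mpr hu1))
    rw [hm, ← Real.rpow_neg_one u, ← Real.rpow_mul hu0.le, ← Real.rpow_add hu0]
    norm_num
    rw [sub_eq_add_neg]
  · have h1 : IntegrableOn (fun u : ℝ => u ^ (-ε - 1)) (Set.Ioi (1:ℝ)) :=
      (integrableOn_Ioi_rpow_iff zero_lt_one).mpr (by linarith)
    refine h1.congr_fun (fun u hu => ?_) measurableSet_Ioi
    have hu1 : (1:ℝ) < u := hu
    have hu0 : (0:ℝ) < u := lt_trans zero_lt_one hu1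
    have hm : Dd u = u := max_eq_left ((inv_le_one_of_one_le₀ hu1.le).trans hu1.le)
    rw [hm, ← Real.rpow_neg_one u, ← Real.rpow_add hu0]
    norm_num
    rw [sub_eq_add_neg]

lemma orthant_eq (n : ℕ) :
    {t : Fin n → ℝ | ∀ i, 0 < t i} = Set.pi Set.univ (fun _ => Set.Ioi (0:ℝ)) := by
  ext t; simp [Set.mem_pi]

lemma restrict_orthant (n : ℕ) :
    (volume : Measure (Fin n → ℝ)).restrict {t | ∀ i, 0 < t i}
      = Measure.pi (fun _ : Fin n => volume.restrict (Set.Ioi 0)) := by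
  rw [orthant_eq]
  refine (Measure.pi_eq fun s hs => ?_).symm
  rw [Measure.restrict_apply (MeasurableSet.univ_pi hs), ← Set.pi_inter_distrib,
    volume_pi_pi]
  exact Finset.prod_congr rfl fun i _ => (Measure.restrict_apply (hs i)).symm

lemma integrable_pi_prod {n : ℕ} (f : ℝ → ℝ)
    (hf : Integrable f (volume.restrict (Set.Ioi 0))) :
    Integrable (fun t : Fin n → ℝ => ∏ i, f (t i))
      (Measure.pi fun _ : Fin n => volume.restrict (Set.Ioi 0)) := by
  letI : MeasureSpace ℝ := ⟨(MeasureTheory.volume : Measure ℝ).restrict (Set.Ioi 0)⟩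
  haveI : SigmaFinite (volume : Measure ℝ) := Restrict.sigmaFinite _ _
  exact MeasureTheory.Integrable.fin_nat_prod (f := fun _ : Fin n => f) (fun i => hf)

lemma integrableOn_pi_prod {n : ℕ} (f : ℝ → ℝ)
    (hf : IntegrableOn f (Set.Ioi 0)) :
    IntegrableOn (fun t : Fin n → ℝ => ∏ i, f (t i)) {t | ∀ i, 0 < t i} := by
  rw [IntegrableOn, restrict_orthant]
  exact integrable_pi_prod f hf


set_option maxHeartbeats 1000000 in
/-- The key pointwise inequality. -/
lemma key (r : ℕ) (c' s ε : ℝ) (hc' : 0 ≤ c') (hs : c' + 1 < s)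
    (hε : ε = (2 * ((r : ℝ) + 1) ^ 2)⁻¹) (N : ℕ)
    (hN : ((r : ℝ) + 1) * s + c' + 1 ≤ N)
    (u : Fin (r + 1) → ℝ) (hu : ∀ i, 0 < u i) (t : ℝ) (ht : 0 < t)
    (hlast : u (Fin.last r) = 2 * (t + t⁻¹)⁻¹) :
    (∏ i, u i) ^ s * ((∏ j : Fin r, (1 + u j.castSucc / u j.succ)) ^ N)⁻¹ *
      ((∏ j : Fin r, (u j.castSucc / u j.succ + (u j.castSucc / u j.succ)⁻¹) ^ c') *
        (t + t⁻¹) ^ c')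
    ≤ (2 ^ (c' * r) * 2 ^ (c' + 1)) *
      ((∏ i : Fin r, Dd (u i.castSucc) ^ (-ε)) * Dd t ^ (-ε)) := by

  have hr1 : (1:ℝ) ≤ (r:ℝ) + 1 := by have := Nat.cast_nonneg (α := ℝ) r; linarith
  have hεpos : 0 < ε := by rw [hε]; positivity
  have hε2 : ((r:ℝ) + 1) * ε ≤ 1 / 2 := by
    have h1 : ((r:ℝ)+1) * ε = (2*((r:ℝ)+1))⁻¹ := by
      rw [hε]; field_simp
    rw [h1]
    rw [show (1:ℝ)/2 = 2⁻¹ by norm_num]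
    exact inv_anti₀ two_pos (by linarith)
  have hε1 : ε ≤ 1 := by nlinarith
  have hspos : 0 < s := by linarith
  -- basic objects
  set β : Fin r → ℝ := fun j => u j.castSucc / u j.succ with hβdef
  have hβ : ∀ j, 0 < β j := fun j => div_pos (hu _) (hu _)
  set P : ℝ := ∏ j, Dd (β j) with hPdef
  have hP1 : 1 ≤ P := by
    rw [hPdef]
    calc (1:ℝ) = ∏ _j : Fin r, 1 := by rw [Finset.prod_const_one]
      _ ≤ ∏ j, Dd (β j) := Finset.prod_le_prod (fun _ _ => zero_le_one)
          (fun j _ => one_le_Dd (hβ j))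
  have hPpos : 0 < P := lt_of_lt_of_le one_pos hP1
  set T : ℝ := Dd (u (Fin.last r)) with hTdef
  have htt : 0 < t + t⁻¹ := by positivity
  have hul1 : u (Fin.last r) ≤ 1 := by
    rw [hlast]
    rw [mul_inv_le_iff₀ htt, one_mul]
    nlinarith [sq_nonneg (t - 1), ht, mul_inv_cancel₀ ht.ne']
  have hTval : T = (t + t⁻¹) / 2 := by
    rw [hTdef, Dd, max_eq_right (hul1.trans ((one_le_inv₀ (hu _)).mpr hul1)), hlast,
      mul_inv, inv_inv]
    ring
  have hT1 : 1 ≤ T := by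
    rw [hTdef]; exact one_le_Dd (hu _)
  have hTpos : 0 < T := lt_of_lt_of_le one_pos hT1
  have hulT : u (Fin.last r) = T⁻¹ := by
    rw [hTval, hlast]; field_simp
  -- each Dd (β j) is at most P
  have hβP : ∀ j, Dd (β j) ≤ P := by
    intro j
    rw [hPdef, ← Finset.mul_prod_erase univ _ (mem_univ j)]
    refine le_mul_of_one_le_right (Dd_pos (hβ j)).le ?_
    calc (1:ℝ) = ∏ _j ∈ univ.erase j, 1 := by rw [Finset.prod_const_one]
      _ ≤ _ := Finset.prod_le_prod (fun _ _ => zero_le_one) (fun k _ => one_le_Dd (hβ k))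
  -- bound on Dd (u i)
  have humain : ∀ i : Fin (r + 1), Dd (u i) ≤ P ^ (r + 1 - (i : ℕ)) * T := by
    intro i
    induction i using Fin.reverseInduction with
    | last =>
        rw [Fin.val_last, show r + 1 - r = 1 by omega, pow_one, ← hTdef]
        exact le_mul_of_one_le_left hTpos.le hP1
    | cast i ih =>
        have h1 : Dd (u i.castSucc) ≤ Dd (β i) * Dd (u i.succ) := Dd_submul (hu _) (hu _)
        have h2 : Dd (β i) * Dd (u i.succ) ≤ P * (P ^ (r + 1 - ((i : ℕ) + 1)) * T) := by
          refine mul_le_mul (hβP i) ?_ (Dd_pos (hu _)).le hPpos.le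
          simpa [Fin.val_succ] using ih
        refine h1.trans (h2.trans (le_of_eq ?_))
        rw [← mul_assoc, ← pow_succ']
        congr 2
        have := i.is_lt
        rw [Fin.coe_castSucc]
        omega
  have huP : ∀ i : Fin (r + 1), Dd (u i) ≤ P ^ (r + 1) * T := by
    intro i
    refine (humain i).trans (mul_le_mul_of_nonneg_right ?_ hTpos.le)
    exact pow_le_pow_right₀ hP1 (Nat.sub_le _ _)
  -- telescoping identity
  have hfact : ∀ i : Fin (r + 1),
      u i = (∏ j : Fin r, if i ≤ j.castSucc then β j else 1) * u (Fin.last r) := by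
    intro i
    induction i using Fin.reverseInduction with
    | last =>
        rw [Finset.prod_eq_one, one_mul]
        intro j _
        rw [if_neg (not_le_of_gt (Fin.castSucc_lt_last j))]
    | cast i ih =>
        have hsplit : ∀ j : Fin r,
            (if i.castSucc ≤ j.castSucc then β j else 1)
              = (if j = i then β j else 1) * (if i.succ ≤ j.castSucc then β j else 1) := by
          intro j
          rcases lt_trichotomy i j with h | h | h
          · rw [if_pos (Fin.castSucc_le_castSucc_iff.mpr h.le),
              if_neg (by exact fun hji => absurd (hji ▸ h) (lt_irrefl _)),
              if_pos (Fin.succ_le_castSucc_iff.mpr h), one_mul]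
          · subst h
            rw [if_pos le_rfl, if_pos rfl,
              if_neg (by simp [Fin.succ_le_castSucc_iff]), mul_one]
          · rw [if_neg (by simpa [Fin.castSucc_le_castSucc_iff] using not_le_of_gt h),
              if_neg (by exact fun hji => absurd (hji ▸ h) (lt_irrefl _)),
              if_neg (by simp [Fin.succ_le_castSucc_iff]; exact le_of_lt h), mul_one]
        calc u i.castSucc = β i * u i.succ := (div_mul_cancel₀ _ (hu i.succ).ne').symm
          _ = β i * ((∏ j : Fin r, if i.succ ≤ j.castSucc then β j else 1) *
                u (Fin.last r)) := by rw [← ih]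
          _ = ((∏ j : Fin r, if j = i then β j else 1) *
                (∏ j : Fin r, if i.succ ≤ j.castSucc then β j else 1)) *
                u (Fin.last r) := by rw [Finset.prod_ite_eq' univ i β, if_pos (Finset.mem_univ i)]; ring
          _ = _ := by
              rw [← Finset.prod_mul_distrib, Finset.prod_congr rfl fun j _ => (hsplit j).symm]
  -- gamma
  set γ : Fin r → ℝ := fun j => if 1 ≤ β j then (β j ^ s) ^ (r + 1) else β j ^ s with hγdef
  have hγnn : ∀ j, 0 ≤ γ j := by
    intro j; rw [hγdef]; dsimp only
    split
    · exact pow_nonneg (Real.rpow_nonneg (hβ j).le s) _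
    · exact Real.rpow_nonneg (hβ j).le s
  -- inner product bound
  have hinner : ∀ j : Fin r,
      (∏ i : Fin (r + 1), if i ≤ (j.castSucc : Fin (r + 1)) then β j ^ s else 1) ≤ γ j := by
    intro j
    rcases le_or_gt 1 (β j) with hb | hb
    · have h1 : ∀ i : Fin (r + 1),
          (if i ≤ (j.castSucc : Fin (r + 1)) then β j ^ s else 1) ≤ β j ^ s := by
        intro i; split
        · exact le_rfl
        · exact Real.one_le_rpow hb hspos.le
      have := Finset.prod_le_prod (s := (Finset.univ : Finset (Fin (r+1)))) (f := fun i : Fin (r+1) =>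
          if i ≤ (j.castSucc : Fin (r + 1)) then β j ^ s else 1)
          (g := fun _ => β j ^ s)
          (fun i _ => by split; exacts [Real.rpow_nonneg (hβ j).le s, zero_le_one])
          (fun i _ => h1 i)
      rw [Finset.prod_const, Finset.card_univ, Fintype.card_fin] at this
      rw [hγdef]; dsimp only; rw [if_pos hb]
      exact this
    · rw [hγdef]; dsimp only; rw [if_neg (not_le.mpr hb)]
      rw [← Finset.mul_prod_erase univ _ (Finset.mem_univ (0 : Fin (r + 1))),
        if_pos (Fin.zero_le _)]
      refine mul_le_of_le_one_right (Real.rpow_nonneg (hβ j).le s) ?_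
      refine Finset.prod_le_one (fun i _ => ?_) (fun i _ => ?_)
      · split
        · exact Real.rpow_nonneg (hβ j).le s
        · exact zero_le_one
      · split
        · exact Real.rpow_le_one (hβ j).le hb.le hspos.le
        · exact le_rfl
  -- A ^ s decomposition
  have hprodpos : ∀ i : Fin (r + 1),
      (0:ℝ) < ∏ j : Fin r, if i ≤ (j.castSucc : Fin (r + 1)) then β j else 1 := by
    intro i
    refine Finset.prod_pos fun j _ => ?_
    split
    · exact hβ j
    · exact one_pos
  have hAeq : (∏ i, u i)
      = (∏ i : Fin (r + 1), ∏ j : Fin r, if i ≤ (j.castSucc : Fin (r + 1)) then β j else 1) *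
        (u (Fin.last r)) ^ (r + 1) := by
    calc (∏ i, u i)
        = ∏ i, ((∏ j : Fin r, if i ≤ (j.castSucc : Fin (r + 1)) then β j else 1) *
            u (Fin.last r)) := Finset.prod_congr rfl fun i _ => hfact i
      _ = _ := by
          rw [Finset.prod_mul_distrib, Finset.prod_const, Finset.card_univ, Fintype.card_fin]
  have hApow : (∏ i, u i) ^ s
      = (∏ j : Fin r, ∏ i : Fin (r + 1), if i ≤ (j.castSucc : Fin (r + 1)) then β j ^ s else 1) *
        T ^ (-(((r:ℝ) + 1) * s)) := by
    rw [hAeq, Real.mul_rpow (Finset.prod_nonneg fun i _ => (hprodpos i).le)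
      (pow_nonneg (hu _).le _)]
    congr 1
    · rw [← Real.finset_prod_rpow _ _ (fun i _ => (hprodpos i).le) s]
      have hsw : ∀ i : Fin (r + 1),
          (∏ j : Fin r, if i ≤ (j.castSucc : Fin (r + 1)) then β j else 1) ^ s
            = ∏ j : Fin r, (if i ≤ (j.castSucc : Fin (r + 1)) then β j ^ s else 1) := by
        intro i
        rw [← Real.finset_prod_rpow _ _
          (fun j _ => by split; exacts [(hβ j).le, zero_le_one]) s]
        refine Finset.prod_congr rfl fun j _ => ?_
        split
        · rfl
        · exact Real.one_rpow s
      rw [Finset.prod_congr rfl fun i _ => hsw i, Finset.prod_comm]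
    · rw [hulT, ← Real.rpow_natCast (T⁻¹) (r + 1), ← Real.rpow_mul (by positivity),
        Real.inv_rpow hTpos.le, ← Real.rpow_neg hTpos.le]
      congr 1
      push_cast
      ring
  -- per-j bound
  have hperj : ∀ j : Fin r,
      γ j * ((1 + β j) ^ N)⁻¹ * (2 * Dd (β j)) ^ c' ≤ 2 ^ c' * Dd (β j) ^ (-(1/2) : ℝ) := by
    intro j
    have hb0 : 0 < β j := hβ j
    have h1b : (0:ℝ) < 1 + β j := by linarith
    rcases le_or_gt 1 (β j) with hb | hb
    · have hD : Dd (β j) = β j := max_eq_left ((inv_le_one_of_one_le₀ hb).trans hb)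
      rw [hγdef]; dsimp only; rw [if_pos hb, hD, Real.mul_rpow (by norm_num) hb0.le]
      rw [show (β j ^ s) ^ (r + 1) * ((1 + β j) ^ N)⁻¹ * (2 ^ c' * β j ^ c')
          = 2 ^ c' * ((β j ^ s) ^ (r + 1) * β j ^ c' * ((1 + β j) ^ N)⁻¹) from by ring]
      refine mul_le_mul_of_nonneg_left ?_ (Real.rpow_nonneg (by norm_num) c')
      rw [mul_inv_le_iff₀ (pow_pos h1b N)]
      have e1 : (β j ^ s) ^ (r + 1) * β j ^ c' = β j ^ (s * ((r:ℝ) + 1) + c') := by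
        rw [← Real.rpow_natCast (β j ^ s) (r + 1), ← Real.rpow_mul hb0.le,
          ← Real.rpow_add hb0]
        congr 1
        push_cast
        ring
      rw [e1]
      have e2 : β j ^ (s * ((r:ℝ) + 1) + c') ≤ β j ^ ((N:ℝ) - 1/2) := by
        refine Real.rpow_le_rpow_of_exponent_le hb ?_
        have hcomm : s * ((r:ℝ) + 1) = ((r:ℝ) + 1) * s := mul_comm _ _
        linarith
      refine e2.trans ?_
      have e3 : β j ^ ((N:ℝ) - 1/2) = β j ^ (-(1/2) : ℝ) * β j ^ (N:ℝ) := by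
        rw [← Real.rpow_add hb0]; congr 1; ring
      rw [e3, Real.rpow_natCast]
      exact mul_le_mul_of_nonneg_left (pow_le_pow_left₀ hb0.le (by linarith) N)
        (Real.rpow_nonneg hb0.le _)
    · have hD : Dd (β j) = (β j)⁻¹ := max_eq_right (hb.le.trans ((one_le_inv₀ hb0).mpr hb.le))
      rw [hγdef]; dsimp only; rw [if_neg (not_le.mpr hb), hD,
        Real.mul_rpow (by norm_num) (by positivity)]
      have eR : ((β j)⁻¹) ^ (-(1/2) : ℝ) = β j ^ ((1:ℝ)/2) := by
        rw [Real.rpow_neg (by positivity), Real.inv_rpow hb0.le, inv_inv]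
      rw [eR]
      have h2 : ((β j)⁻¹) ^ c' = (β j ^ c')⁻¹ := Real.inv_rpow hb0.le c'
      rw [h2]
      have h3 : ((1 + β j) ^ N)⁻¹ ≤ 1 := by
        refine inv_le_one_of_one_le₀ (one_le_pow₀ (by linarith))
      calc β j ^ s * ((1 + β j) ^ N)⁻¹ * (2 ^ c' * (β j ^ c')⁻¹)
          ≤ β j ^ s * 1 * (2 ^ c' * (β j ^ c')⁻¹) := by
            refine mul_le_mul_of_nonneg_right (mul_le_mul_of_nonneg_left h3
              (Real.rpow_nonneg hb0.le s)) (by positivity)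
        _ = 2 ^ c' * (β j ^ s * (β j ^ c')⁻¹) := by ring
        _ = 2 ^ c' * β j ^ (s - c') := by
            rw [Real.rpow_sub hb0, div_eq_mul_inv]
        _ ≤ 2 ^ c' * β j ^ ((1:ℝ)/2) := by
            refine mul_le_mul_of_nonneg_left ?_ (Real.rpow_nonneg (by norm_num) c')
            exact Real.rpow_le_rpow_of_exponent_ge hb0 hb.le (by linarith)
  -- bound for the T part
  have hTbound : T ^ (-(((r:ℝ) + 1) * s)) * (2 * T) ^ c'
      ≤ 2 ^ (c' + 1) * 2 ^ (-ε) * T ^ (-(((r:ℝ) + 1) * ε)) := by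
    rw [Real.mul_rpow (by norm_num) hTpos.le]
    rw [show T ^ (-(((r:ℝ)+1)*s)) * ((2:ℝ) ^ c' * T ^ c')
        = 2 ^ c' * (T ^ (-(((r:ℝ)+1)*s)) * T ^ c') from by ring]
    rw [← Real.rpow_add hTpos]
    have h2 : (2:ℝ) ^ c' ≤ 2 ^ (c' + 1) * 2 ^ (-ε) := by
      rw [← Real.rpow_add two_pos]
      exact Real.rpow_le_rpow_of_exponent_le one_le_two (by linarith)
    have h3 : T ^ (-(((r:ℝ)+1)*s) + c') ≤ T ^ (-(((r:ℝ)+1)*ε)) := by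
      refine Real.rpow_le_rpow_of_exponent_le hT1 ?_
      have h0 : (0:ℝ) ≤ (r:ℝ) * s := mul_nonneg (Nat.cast_nonneg r) hspos.le
      nlinarith [hε2]
    exact mul_le_mul h2 h3 (Real.rpow_nonneg hTpos.le _) (by positivity)
  -- comparison of the constant powers with the product bound
  have hXpos : (0:ℝ) < P ^ (r + 1) * T := mul_pos (pow_pos hPpos _) hTpos
  have hcomp : 2 ^ (-ε) * P ^ (-(1/2) : ℝ) * T ^ (-(((r:ℝ) + 1) * ε))
      = ((P ^ (r + 1) * T) ^ (-ε)) ^ r * ((2 * (P ^ (r + 1) * T)) ^ (-ε)) := by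
    rw [Real.mul_rpow (by norm_num) hXpos.le]
    rw [show ((P ^ (r+1) * T) ^ (-ε)) ^ r * ((2:ℝ) ^ (-ε) * (P ^ (r+1) * T) ^ (-ε))
        = 2 ^ (-ε) * ((P ^ (r+1) * T) ^ (-ε)) ^ (r + 1) from by ring]
    rw [← Real.rpow_natCast ((P ^ (r+1) * T) ^ (-ε)) (r + 1), ← Real.rpow_mul hXpos.le,
      Real.mul_rpow (pow_nonneg hPpos.le _) hTpos.le, ← Real.rpow_natCast P (r + 1),
      ← Real.rpow_mul hPpos.le]
    have eP : ((r:ℝ) + 1) * (-ε * ((r:ℕ) + 1 : ℕ)) = -(1/2) := by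
      push_cast
      rw [hε]
      field_simp
    have eT : -ε * (((r:ℕ) + 1 : ℕ) : ℝ) = -(((r:ℝ) + 1) * ε) := by push_cast; ring
    rw [show (((r:ℕ) + 1 : ℕ) : ℝ) * (-ε * (((r:ℕ) + 1 : ℕ) : ℝ))
        = ((r:ℝ) + 1) * (-ε * (((r:ℕ) + 1 : ℕ) : ℕ)) from by push_cast; ring, eP, eT]
    ring
  -- final assembly
  have h2T : t + t⁻¹ = 2 * T := by rw [hTval]; ring
  rw [h2T]
  have hXinn : ∀ j : Fin r, (0:ℝ) < 1 + β j := fun j => by have := hβ j; linarith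
  have hXi : ((∏ j : Fin r, (1 + β j)) ^ N)⁻¹ = ∏ j : Fin r, ((1 + β j) ^ N)⁻¹ := by
    rw [← Finset.prod_pow, ← Finset.prod_inv_distrib]
  have hstep1 : (∏ i, u i) ^ s ≤ (∏ j, γ j) * T ^ (-(((r:ℝ) + 1) * s)) := by
    rw [hApow]
    refine mul_le_mul_of_nonneg_right ?_ (Real.rpow_nonneg hTpos.le _)
    refine Finset.prod_le_prod (fun j _ => Finset.prod_nonneg fun i _ => ?_) (fun j _ => hinner j)
    split
    · exact Real.rpow_nonneg (hβ j).le s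
    · exact zero_le_one
  have h2Tnn : (0:ℝ) ≤ (2 * T) ^ c' := Real.rpow_nonneg (by linarith) c'
  have hXiinv_nn : (0:ℝ) ≤ ((∏ j : Fin r, (1 + β j)) ^ N)⁻¹ :=
    inv_nonneg.mpr (pow_nonneg (Finset.prod_nonneg fun j _ => (hXinn j).le) N)
  have hββinv_nn : ∀ j : Fin r, (0:ℝ) ≤ β j + (β j)⁻¹ := fun j => by
    have h1 := hβ j; have h2 := inv_pos.mpr (hβ j); linarith
  have h2Dd_nn : ∀ j : Fin r, (0:ℝ) ≤ 2 * Dd (β j) := fun j => by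
    have := Dd_pos (hβ j); linarith
  have hJB : (∏ j : Fin r, (β j + (β j)⁻¹) ^ c') * (2 * T) ^ c'
      ≤ (∏ j : Fin r, (2 * Dd (β j)) ^ c') * (2 * T) ^ c' := by
    refine mul_le_mul_of_nonneg_right ?_ h2Tnn
    refine Finset.prod_le_prod (fun j _ => Real.rpow_nonneg (hββinv_nn j) c') (fun j _ => ?_)
    exact Real.rpow_le_rpow (hββinv_nn j) add_inv_le_two_Dd hc'
  calc (∏ i, u i) ^ s * ((∏ j : Fin r, (1 + β j)) ^ N)⁻¹ *
        ((∏ j : Fin r, (β j + (β j)⁻¹) ^ c') * (2 * T) ^ c')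
      ≤ ((∏ j, γ j) * T ^ (-(((r:ℝ) + 1) * s))) * ((∏ j : Fin r, (1 + β j)) ^ N)⁻¹ *
        ((∏ j : Fin r, (2 * Dd (β j)) ^ c') * (2 * T) ^ c') := by
        refine mul_le_mul (mul_le_mul_of_nonneg_right hstep1 hXiinv_nn) hJB ?_ ?_
        · exact mul_nonneg (Finset.prod_nonneg fun j _ => Real.rpow_nonneg (hββinv_nn j) c')
            h2Tnn
        · exact mul_nonneg (mul_nonneg (Finset.prod_nonneg fun j _ => hγnn j)
            (Real.rpow_nonneg hTpos.le _)) hXiinv_nn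
    _ = (∏ j : Fin r, γ j * ((1 + β j) ^ N)⁻¹ * (2 * Dd (β j)) ^ c') *
        (T ^ (-(((r:ℝ) + 1) * s)) * (2 * T) ^ c') := by
        rw [hXi, Finset.prod_mul_distrib, Finset.prod_mul_distrib]
        ring
    _ ≤ (∏ j : Fin r, 2 ^ c' * Dd (β j) ^ (-(1/2) : ℝ)) *
        (2 ^ (c' + 1) * 2 ^ (-ε) * T ^ (-(((r:ℝ) + 1) * ε))) := by
        refine mul_le_mul (Finset.prod_le_prod (fun j _ => ?_) (fun j _ => hperj j)) hTbound
          (mul_nonneg (Real.rpow_nonneg hTpos.le _) h2Tnn)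
          (Finset.prod_nonneg fun j _ => mul_nonneg (Real.rpow_nonneg (by norm_num) c')
            (Real.rpow_nonneg (Dd_pos (hβ j)).le _))
        refine mul_nonneg (mul_nonneg (hγnn j)
          (inv_nonneg.mpr (pow_nonneg (hXinn j).le N))) (Real.rpow_nonneg (h2Dd_nn j) c')
    _ = (2 ^ (c' * r) * 2 ^ (c' + 1)) *
        (2 ^ (-ε) * P ^ (-(1/2) : ℝ) * T ^ (-(((r:ℝ) + 1) * ε))) := by
        rw [Finset.prod_mul_distrib, Finset.prod_const, Finset.card_univ, Fintype.card_fin,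
          Real.finset_prod_rpow _ _ (fun j _ => (Dd_pos (hβ j)).le) _, ← hPdef,
          ← Real.rpow_natCast ((2:ℝ) ^ c') r, ← Real.rpow_mul (by norm_num : (0:ℝ) ≤ 2)]
        ring
    _ ≤ (2 ^ (c' * r) * 2 ^ (c' + 1)) *
        ((∏ i : Fin r, Dd (u i.castSucc) ^ (-ε)) * Dd t ^ (-ε)) := by
        refine mul_le_mul_of_nonneg_left ?_
          (mul_nonneg (Real.rpow_nonneg (by norm_num) _) (Real.rpow_nonneg (by norm_num) _))
        rw [hcomp]
        have hb1 : ((P ^ (r + 1) * T) ^ (-ε)) ^ r ≤ ∏ i : Fin r, Dd (u i.castSucc) ^ (-ε) := by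
          rw [show ((P ^ (r + 1) * T) ^ (-ε)) ^ r
              = ∏ _i : Fin r, (P ^ (r + 1) * T) ^ (-ε) from by
            rw [Finset.prod_const, Finset.card_univ, Fintype.card_fin]]
          refine Finset.prod_le_prod (fun i _ => Real.rpow_nonneg hXpos.le _) (fun i _ => ?_)
          exact rpow_neg_anti hεpos.le (Dd_pos (hu _)) (huP _)
        have hb2 : (2 * (P ^ (r + 1) * T)) ^ (-ε) ≤ Dd t ^ (-ε) := by
          refine rpow_neg_anti hεpos.le (Dd_pos ht) ?_
          have h1 : Dd t ≤ 2 * T := by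
            refine (Dd_le_add_inv ht).trans ?_
            rw [h2T]
          have h2 : (2:ℝ) * T ≤ 2 * (P ^ (r + 1) * T) := by
            have : (1:ℝ) ≤ P ^ (r + 1) := one_le_pow₀ hP1
            nlinarith
          linarith
        refine mul_le_mul hb1 hb2 (Real.rpow_nonneg (by linarith [hXpos]) _) ?_
        exact Finset.prod_nonneg fun i _ => Real.rpow_nonneg (Dd_pos (hu _)).le _

end ConvMajorAux

open MeasureTheory Finset

/-- Lemma 6.3: convergence of the majorizing integral.  Here
`t'_{r+1} = 2(t_{r+1}⁻² + t_{r+1}² + 2)^{-1/2}`, `tmod` replaces the last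
coordinate `t_{r+1}` by `t'_{r+1}`, `ξ(u) = ∏_{i=1}^r (1 + u_i/u_{i+1})`, and the
measure is `d×𝐭 = ∏ dt_i/t_i` on the positive orthant.  If the nonnegative
continuous function `J` satisfies
`J(𝐭) ≤ ∏_j (α_j + α_j⁻¹)^{c'} · (t_{r+1} + t_{r+1}⁻¹)^{c'}` with
`α_j = tmod(𝐭)_j / tmod(𝐭)_{j+1}`, then there is `c_J > 0` such that for every
`s > c_J` there is a positive integer `N` with
`∫ (t₁⋯t_r t'_{r+1})^s ξ(tmod 𝐭)^{-N} J(𝐭) d×𝐭 < ∞`. -/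
theorem convergence_majorizing_integral (r : ℕ) (c' : ℝ) (hc' : 0 ≤ c')
    (J : (Fin (r + 1) → ℝ) → ℝ)
    (hJcont : ContinuousOn J {t | ∀ i, 0 < t i})
    (hJnonneg : ∀ t ∈ {t : Fin (r + 1) → ℝ | ∀ i, 0 < t i}, 0 ≤ J t) :
    let tprime : ℝ → ℝ := fun u => 2 * (u⁻¹ ^ 2 + u ^ 2 + 2) ^ ((-1 : ℝ) / 2)
    let tmod : (Fin (r + 1) → ℝ) → (Fin (r + 1) → ℝ) := fun t i =>
      if i = Fin.last r then tprime (t i) else t i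
    let ξ : (Fin (r + 1) → ℝ) → ℝ := fun u =>
      ∏ i : Fin r, (1 + u i.castSucc / u i.succ)
    (∀ t : Fin (r + 1) → ℝ, (∀ i, 0 < t i) →
        J t ≤ (∏ j : Fin r,
            (tmod t j.castSucc / tmod t j.succ +
              (tmod t j.castSucc / tmod t j.succ)⁻¹) ^ c') *
          (t (Fin.last r) + (t (Fin.last r))⁻¹) ^ c') →
    ∃ cJ : ℝ, 0 < cJ ∧ ∀ s : ℝ, s > cJ → ∃ N : ℕ, 0 < N ∧
      IntegrableOn
        (fun t : Fin (r + 1) → ℝ =>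
          ((∏ i : Fin r, t i.castSucc) * tprime (t (Fin.last r))) ^ s *
            (ξ (tmod t) ^ N)⁻¹ * J t * ∏ i : Fin (r + 1), (t i)⁻¹)
        {t | ∀ i, 0 < t i} := by
  intro tprime tmod ξ hJ
  have htprime : tprime = fun u => 2 * (u⁻¹ ^ 2 + u ^ 2 + 2) ^ ((-1 : ℝ) / 2) := rfl
  have htmod : tmod = fun t i => if i = Fin.last r then tprime (t i) else t i := rfl
  have hξ : ξ = fun u => ∏ i : Fin r, (1 + u i.castSucc / u i.succ) := rfl
  have hS_meas : MeasurableSet {t : Fin (r + 1) → ℝ | ∀ i, 0 < t i} := by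
    rw [ConvMajorAux.orthant_eq]
    exact MeasurableSet.univ_pi fun i => measurableSet_Ioi
  have htprime_pos : ∀ v : ℝ, 0 < tprime v := by
    intro v
    rw [htprime]
    have : (0:ℝ) < v⁻¹ ^ 2 + v ^ 2 + 2 := by positivity
    positivity
  refine ⟨c' + 1, by linarith, fun s hs => ?_⟩
  have hspos : 0 < s := by linarith
  set ε : ℝ := (2 * ((r : ℝ) + 1) ^ 2)⁻¹ with hεdef
  have hεpos : 0 < ε := by rw [hεdef]; positivity
  have hNpos0 : 0 < ((r : ℝ) + 1) * s + c' + 1 := by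
    have : (0:ℝ) < ((r : ℝ) + 1) * s := by positivity
    linarith
  refine ⟨⌈((r : ℝ) + 1) * s + c' + 1⌉₊, Nat.ceil_pos.mpr hNpos0, ?_⟩
  set N : ℕ := ⌈((r : ℝ) + 1) * s + c' + 1⌉₊ with hNdef
  have hNle : ((r : ℝ) + 1) * s + c' + 1 ≤ (N : ℝ) := Nat.le_ceil _
  -- the dominating function
  set g : (Fin (r + 1) → ℝ) → ℝ := fun t =>
    (2 ^ (c' * r) * 2 ^ (c' + 1)) *
      ∏ i, (ConvMajorAux.Dd (t i) ^ (-ε) * (t i)⁻¹) with hgdef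
  have hg_int : IntegrableOn g {t | ∀ i, 0 < t i} :=
    (ConvMajorAux.integrableOn_pi_prod _ (ConvMajorAux.integrable_h hεpos)).const_mul _
  -- continuity of the integrand on the positive orthant
  have hcont : ContinuousOn
      (fun t : Fin (r + 1) → ℝ =>
        ((∏ i : Fin r, t i.castSucc) * tprime (t (Fin.last r))) ^ s *
          (ξ (tmod t) ^ N)⁻¹ * J t * ∏ i : Fin (r + 1), (t i)⁻¹)
      {t | ∀ i, 0 < t i} := by
    have hcoord : ∀ i : Fin (r + 1), ContinuousOn (fun t : Fin (r + 1) → ℝ => t i)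
        {t : Fin (r + 1) → ℝ | ∀ i, 0 < t i} := fun i => (continuous_apply i).continuousOn
    have htpc : ∀ i : Fin (r + 1), ContinuousOn (fun t : Fin (r + 1) → ℝ => tprime (t i))
        {t : Fin (r + 1) → ℝ | ∀ i, 0 < t i} := by
      intro i
      simp only [htprime]
      refine continuousOn_const.mul (ContinuousOn.rpow_const ?_ fun t ht => Or.inl ?_)
      · exact ((((hcoord i).inv₀ fun t ht => (ht i).ne').pow 2).add
          ((hcoord i).pow 2)).add continuousOn_const
      · have : (0:ℝ) < (t i)⁻¹ ^ 2 + (t i) ^ 2 + 2 := by positivity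
        exact this.ne'
    have hc1 : ContinuousOn
        (fun t : Fin (r + 1) → ℝ =>
          ((∏ i : Fin r, t i.castSucc) * tprime (t (Fin.last r))) ^ s)
        {t : Fin (r + 1) → ℝ | ∀ i, 0 < t i} := by
      refine ContinuousOn.rpow_const (ContinuousOn.mul ?_ (htpc _))
        fun t ht => Or.inr hspos.le
      exact continuousOn_finset_prod _ fun i _ => hcoord i.castSucc
    have hmodpos : ∀ (t : Fin (r + 1) → ℝ), (∀ i, 0 < t i) → ∀ i, 0 < tmod t i := by
      intro t ht i
      simp only [htmod]
      split
      · exact htprime_pos _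
      · exact ht i
    have hfac : ∀ j : Fin r, ContinuousOn
        (fun t : Fin (r + 1) → ℝ => 1 + tmod t j.castSucc / tmod t j.succ)
        {t : Fin (r + 1) → ℝ | ∀ i, 0 < t i} := by
      intro j
      have hnumc : ContinuousOn (fun t : Fin (r + 1) → ℝ => tmod t j.castSucc)
          {t : Fin (r + 1) → ℝ | ∀ i, 0 < t i} := by
        have hnum : (fun t : Fin (r + 1) → ℝ => tmod t j.castSucc)
            = fun t => t j.castSucc := by
          funext t; simp only [htmod]; rw [if_neg (Fin.castSucc_lt_last j).ne]
        rw [hnum]; exact hcoord _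
      have hdenc : ContinuousOn (fun t : Fin (r + 1) → ℝ => tmod t j.succ)
          {t : Fin (r + 1) → ℝ | ∀ i, 0 < t i} := by
        by_cases hj : (j.succ : Fin (r + 1)) = Fin.last r
        · have hden : (fun t : Fin (r + 1) → ℝ => tmod t j.succ)
              = fun t => tprime (t j.succ) := by
            funext t; simp only [htmod]; rw [if_pos hj]
          rw [hden]; exact htpc _
        · have hden : (fun t : Fin (r + 1) → ℝ => tmod t j.succ) = fun t => t j.succ := by
            funext t; simp only [htmod]; rw [if_neg hj]
          rw [hden]; exact hcoord _
      exact continuousOn_const.add (hnumc.div hdenc fun t ht => (hmodpos t ht j.succ).ne')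
    have hc2 : ContinuousOn (fun t : Fin (r + 1) → ℝ => (ξ (tmod t) ^ N)⁻¹)
        {t : Fin (r + 1) → ℝ | ∀ i, 0 < t i} := by
      have hξc : ContinuousOn (fun t : Fin (r + 1) → ℝ => ξ (tmod t))
          {t : Fin (r + 1) → ℝ | ∀ i, 0 < t i} := by
        simp only [hξ]
        exact continuousOn_finset_prod _ fun j _ => hfac j
      have hξpos' : ∀ t ∈ {t : Fin (r + 1) → ℝ | ∀ i, 0 < t i}, 0 < ξ (tmod t) := by
        intro t ht
        simp only [hξ]
        refine Finset.prod_pos fun j _ => ?_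
        have := div_pos (hmodpos t ht j.castSucc) (hmodpos t ht j.succ)
        linarith
      exact (hξc.pow N).inv₀ fun t ht => (pow_pos (hξpos' t ht) N).ne'
    have hc4 : ContinuousOn (fun t : Fin (r + 1) → ℝ => ∏ i : Fin (r + 1), (t i)⁻¹)
        {t : Fin (r + 1) → ℝ | ∀ i, 0 < t i} :=
      continuousOn_finset_prod _ fun i _ => (hcoord i).inv₀ fun t ht => (ht i).ne'
    exact ((hc1.mul hc2).mul hJcont).mul hc4
  refine Integrable.mono' hg_int (hcont.aestronglyMeasurable hS_meas) ?_
  rw [ae_restrict_iff' hS_meas]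
  refine Filter.Eventually.of_forall fun x hx => ?_
  have hx' : ∀ i, 0 < x i := hx
  set u : Fin (r + 1) → ℝ := tmod x with hudef
  have hu : ∀ i, 0 < u i := by
    intro i
    rw [hudef, htmod]
    dsimp only
    split
    · exact htprime_pos _
    · exact hx' i
  have hucast : ∀ j : Fin r, u j.castSucc = x j.castSucc := by
    intro j
    rw [hudef, htmod]
    dsimp only
    rw [if_neg (Fin.castSucc_lt_last j).ne]
  have hulastp : u (Fin.last r) = tprime (x (Fin.last r)) := by
    rw [hudef, htmod]
    dsimp only
    rw [if_pos rfl]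
  have hulast : u (Fin.last r) = 2 * (x (Fin.last r) + (x (Fin.last r))⁻¹)⁻¹ := by
    rw [hulastp, htprime]
    exact ConvMajorAux.tprime_eq (hx' _)
  have hkey := ConvMajorAux.key r c' s ε hc' hs hεdef N hNle u hu
    (x (Fin.last r)) (hx' _) hulast
  have hApos : 0 < (∏ i : Fin r, x i.castSucc) * tprime (x (Fin.last r)) :=
    mul_pos (Finset.prod_pos fun i _ => hx' _) (htprime_pos _)
  have hξpos : 0 < ξ u := by
    rw [hξ]
    exact Finset.prod_pos fun j _ => by
      have := div_pos (hu j.castSucc) (hu j.succ); linarith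
  have hPinv_nn : (0:ℝ) ≤ ∏ i : Fin (r + 1), (x i)⁻¹ :=
    Finset.prod_nonneg fun i _ => inv_nonneg.mpr (hx' i).le
  have hfnn : (0:ℝ) ≤ ((∏ i : Fin r, x i.castSucc) * tprime (x (Fin.last r))) ^ s *
      (ξ u ^ N)⁻¹ * J x * ∏ i : Fin (r + 1), (x i)⁻¹ := by
    refine mul_nonneg (mul_nonneg (mul_nonneg (Real.rpow_nonneg hApos.le s) ?_)
      (hJnonneg x hx)) hPinv_nn
    exact inv_nonneg.mpr (pow_nonneg hξpos.le N)
  rw [Real.norm_eq_abs, abs_of_nonneg hfnn]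
  have hAeq : (∏ i : Fin r, x i.castSucc) * tprime (x (Fin.last r)) = ∏ i, u i := by
    rw [Fin.prod_univ_castSucc (f := u), hulastp]
    congr 1
    exact Finset.prod_congr rfl fun j _ => (hucast j).symm
  have hJx := hJ x hx'
  rw [← hudef] at hJx
  have hfst_nn : (0:ℝ) ≤ ((∏ i : Fin r, x i.castSucc) * tprime (x (Fin.last r))) ^ s *
      (ξ u ^ N)⁻¹ :=
    mul_nonneg (Real.rpow_nonneg hApos.le s) (inv_nonneg.mpr (pow_nonneg hξpos.le N))
  calc ((∏ i : Fin r, x i.castSucc) * tprime (x (Fin.last r))) ^ s *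
        (ξ u ^ N)⁻¹ * J x * ∏ i : Fin (r + 1), (x i)⁻¹
      ≤ ((∏ i : Fin r, x i.castSucc) * tprime (x (Fin.last r))) ^ s * (ξ u ^ N)⁻¹ *
        ((∏ j : Fin r,
            (u j.castSucc / u j.succ + (u j.castSucc / u j.succ)⁻¹) ^ c') *
          (x (Fin.last r) + (x (Fin.last r))⁻¹) ^ c') *
        ∏ i : Fin (r + 1), (x i)⁻¹ := by
        exact mul_le_mul_of_nonneg_right (mul_le_mul_of_nonneg_left hJx hfst_nn) hPinv_nn
    _ ≤ (2 ^ (c' * r) * 2 ^ (c' + 1)) *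
        ((∏ i : Fin r, ConvMajorAux.Dd (u i.castSucc) ^ (-ε)) *
          ConvMajorAux.Dd (x (Fin.last r)) ^ (-ε)) *
        ∏ i : Fin (r + 1), (x i)⁻¹ := by
        refine mul_le_mul_of_nonneg_right ?_ hPinv_nn
        rw [hAeq, hξ]
        exact hkey
    _ = g x := by
        rw [hgdef]
        dsimp only
        rw [Finset.prod_mul_distrib,
          Fin.prod_univ_castSucc (f := fun i => ConvMajorAux.Dd (x i) ^ (-ε)),
          Finset.prod_congr rfl fun j (_ : j ∈ Finset.univ) => by rw [hucast j]]
        ring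
end
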